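/- arXiv:1602.02070 — 2 statements merged into one kernel-verified Lean document; each statement's English description precedes it below -/
import Mathlib

section
/- Suppose M_r ∈ ℝ^{ρ_r×p} satisfies (1−δ)‖z‖₂² ≤ (p/ρ_r)‖M_r z‖₂² ≤ (1+δ)‖z‖₂² for all z ∈ span(P_{k_r}), with δ ∈ (0,1). Assume λ_{k_r+1} > 0 and γ'_r > 0. Let Ū ∈ ℝ^{p×k} have all columns in span(P_{k_r}), let Ẽ^u ∈ ℝ^{ρ_r×k}, and set Ũ = M_r Ū + Ẽ^u. Let U* be a minimizer over U ∈ ℝ^{p×k} of ‖M_r U − Ũ‖_F² + γ'_r tr(U^⊤ L_r U), and set Ū* = P_{k_r} P_{k_r}^⊤ U*. Then ‖Ū* − Ū‖_F ≤ √(2p/(ρ_r(1−δ))) [ (2 + 1/√(γ'_r λ_{k_r+1})) ‖Ẽ^u‖_F + (√(λ_{k_r}/λ_{k_r+1}) + √(γ'_r λ_{k_r})) ‖Ū‖_F ]. -/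
open Matrix

/-- Frobenius norm of a real matrix. -/
noncomputable def frobNorm {m n : Type*} [Fintype m] [Fintype n] (A : Matrix m n ℝ) : ℝ :=
  Real.sqrt (∑ i, ∑ j, (A i j) ^ 2)

/-- Euclidean norm of a real vector. -/
noncomputable def vecNorm {n : Type*} [Fintype n] (x : n → ℝ) : ℝ :=
  Real.sqrt (∑ i, (x i) ^ 2)

/-- A row-selection matrix: its rows are distinct standard basis vectors of `ℝ^p`. -/
def IsRowSelection {ρ p : ℕ} (M : Matrix (Fin ρ) (Fin p) ℝ) : Prop :=
  ∃ f : Fin ρ → Fin p, Function.Injective f ∧ ∀ i j, M i j = if j = f i then 1 else 0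

/-- A column-selection matrix: its columns are distinct standard basis vectors of `ℝ^n`. -/
def IsColSelection {n ρ : ℕ} (M : Matrix (Fin n) (Fin ρ) ℝ) : Prop :=
  ∃ f : Fin ρ → Fin n, Function.Injective f ∧ ∀ i j, M i j = if i = f j then 1 else 0

/-- `y` lies in the span of the columns of `P`. -/
def inColSpan {p k : ℕ} (P : Matrix (Fin p) (Fin k) ℝ) (y : Fin p → ℝ) : Prop :=
  ∃ c : Fin k → ℝ, y = P.mulVec c

/-- `Y ∈ LR(P, Q)`: every column of `Y` lies in the column span of `P` and every row of `Y`
lies in the column span of `Q`. -/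
def memLR {p n kr kc : ℕ} (P : Matrix (Fin p) (Fin kr) ℝ) (Q : Matrix (Fin n) (Fin kc) ℝ)
    (Y : Matrix (Fin p) (Fin n) ℝ) : Prop :=
  (∀ j, inColSpan P (fun i => Y i j)) ∧ (∀ i, inColSpan Q (fun j => Y i j))

/-- Graph cumulative coherence `ν = max_i √n ‖Q^⊤ e_i‖₂`. -/
noncomputable def coherence {n k : ℕ} (Q : Matrix (Fin n) (Fin k) ℝ) : ℝ :=
  ⨆ i : Fin n, Real.sqrt n * vecNorm (fun j => Q i j)

/-! Write `Π = P_{k_r} P_{k_r}ᵀ`. In the eigenbasis `tr(Uᵀ L_r U) = Σᵢ λᵢ ‖(Pᵀ U)ᵢ‖²`, so the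
regulariser is at most `λ_{k_r} ‖Ū‖²` at `Ū` and at least `λ_{k_r+1} ‖U − ΠU‖²` everywhere.
Comparing the objective at `U*` with its value at `Ū` therefore bounds both the fit
`‖M_r U* − Ũ‖` and `√(γ'_r λ_{k_r+1}) ‖U* − ΠU*‖` by `‖Ẽᵘ‖ + √(γ'_r λ_{k_r}) ‖Ū‖`.
Since `ΠU* − Ū` lies in `span(P_{k_r})`, the RIP bounds its norm by `√(p/(ρ_r(1−δ)))` times
`‖M_r(ΠU* − Ū)‖ ≤ ‖M_r U* − Ũ‖ + ‖Ẽᵘ‖ + ‖U* − ΠU*‖`, a row selection being a contraction for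
the Frobenius norm. -/

section Frobenius

attribute [local instance] Matrix.frobeniusNormedAddCommGroup

variable {m n : Type*} [Fintype m] [Fintype n]

theorem frobNorm_eq_norm (A : Matrix m n ℝ) : frobNorm A = ‖A‖ := by
  rw [Matrix.frobenius_norm_def, frobNorm, Real.sqrt_eq_rpow]
  simp [Real.norm_eq_abs, sq_abs]

theorem frobNorm_nonneg (A : Matrix m n ℝ) : 0 ≤ frobNorm A := Real.sqrt_nonneg _

theorem sq_frobNorm (A : Matrix m n ℝ) : frobNorm A ^ 2 = ∑ i, ∑ j, A i j ^ 2 :=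
  Real.sq_sqrt (by positivity)

theorem frobNorm_add_le (A B : Matrix m n ℝ) : frobNorm (A + B) ≤ frobNorm A + frobNorm B := by
  simpa only [frobNorm_eq_norm] using norm_add_le A B

theorem frobNorm_sub_le (A B : Matrix m n ℝ) : frobNorm (A - B) ≤ frobNorm A + frobNorm B := by
  simpa only [frobNorm_eq_norm] using norm_sub_le A B

theorem frobNorm_neg (A : Matrix m n ℝ) : frobNorm (-A) = frobNorm A := by
  simpa only [frobNorm_eq_norm] using norm_neg A

theorem sq_frobNorm_eq_trace (A : Matrix m n ℝ) : frobNorm A ^ 2 = trace (Aᵀ * A) := by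
  rw [sq_frobNorm, trace, Finset.sum_comm]
  simp only [diag_apply, mul_apply, transpose_apply, sq]

theorem frobNorm_orthogonal_mul [DecidableEq m] {P : Matrix m m ℝ} (hP : Pᵀ * P = 1)
    (X : Matrix m n ℝ) : frobNorm (P * X) = frobNorm X := by
  refine (sq_eq_sq₀ (frobNorm_nonneg _) (frobNorm_nonneg _)).1 ?_
  rw [sq_frobNorm_eq_trace, sq_frobNorm_eq_trace, transpose_mul, Matrix.mul_assoc,
    ← Matrix.mul_assoc Pᵀ, hP, Matrix.one_mul]

theorem trace_transpose_mul_diagonal_mul [DecidableEq m] (d : m → ℝ) (C : Matrix m n ℝ) :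
    trace (Cᵀ * diagonal d * C) = ∑ i, d i * ∑ j, C i j ^ 2 := by
  simp only [trace, diag_apply, mul_apply, transpose_apply, diagonal_apply, mul_ite, mul_zero,
    Finset.sum_ite_eq', Finset.mem_univ, if_true, Finset.mul_sum, sq]
  rw [Finset.sum_comm]
  refine Finset.sum_congr rfl fun i _ => Finset.sum_congr rfl fun j _ => by ring

end Frobenius

theorem one_submatrix_mul_transpose {n ι : Type*} [DecidableEq n] [Fintype ι] {e : ι → n}
    (he : Function.Injective e) :
    (1 : Matrix n n ℝ).submatrix id e * ((1 : Matrix n n ℝ).submatrix id e)ᵀ =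
      diagonal ((Set.range e).indicator 1) := by
  ext a b
  simp only [mul_apply, submatrix_apply, transpose_apply, id, one_apply, diagonal_apply]
  by_cases ha : a ∈ Set.range e
  · obtain ⟨l, rfl⟩ := ha
    rw [Finset.sum_eq_single l (fun x _ hx => by simp [he.ne hx.symm]) (by simp)]
    simp [eq_comm]
  · have : ∀ x, e x ≠ a := fun x hx => ha ⟨x, hx⟩
    simp [Set.indicator_of_notMem ha, fun x => (this x).symm]

section Eigenbasis

variable {n ι m : Type*} [Fintype n] [DecidableEq n] {P : Matrix n n ℝ}

theorem transpose_mul_submatrix_id (hP : Pᵀ * P = 1) (e : ι → n) :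
    Pᵀ * P.submatrix id e = (1 : Matrix n n ℝ).submatrix id e := by
  rw [← hP, submatrix_mul Pᵀ P id id e Function.bijective_id, submatrix_id_id]

variable [Fintype ι]

theorem transpose_mul_proj (hP : Pᵀ * P = 1) {e : ι → n} (he : Function.Injective e)
    (X : Matrix n m ℝ) :
    Pᵀ * (P.submatrix id e * (P.submatrix id e)ᵀ * X) =
      -- without the ascription, `*` elaborates to the `CStarMatrix` multiplication instance
      diagonal ((Set.range e).indicator (1 : n → ℝ)) * (Pᵀ * X) := by
  have hPPt : P * Pᵀ = 1 := mul_eq_one_comm.mp hP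
  calc Pᵀ * (P.submatrix id e * (P.submatrix id e)ᵀ * X)
      = (Pᵀ * P.submatrix id e) * (Pᵀ * P.submatrix id e)ᵀ * (Pᵀ * X) := by
        simp only [transpose_mul, transpose_transpose, Matrix.mul_assoc]
        rw [← Matrix.mul_assoc P Pᵀ X, hPPt, Matrix.one_mul]
    _ = _ := by rw [transpose_mul_submatrix_id hP, one_submatrix_mul_transpose he]

theorem transpose_mul_submatrix_mul_apply_of_notMem (hP : Pᵀ * P = 1) {e : ι → n}
    (A : Matrix ι m ℝ) {i : n} (hi : i ∉ Set.range e) (j : m) :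
    (Pᵀ * (P.submatrix id e * A)) i j = 0 := by
  rw [← Matrix.mul_assoc, transpose_mul_submatrix_id hP, mul_apply]
  refine Finset.sum_eq_zero fun l _ => ?_
  rw [submatrix_apply, id, one_apply_ne fun h => hi ⟨l, h.symm⟩, zero_mul]

variable [Fintype m] {L : Matrix n n ℝ} {ev : n → ℝ}

theorem eigenvalues_nonneg (hL : L.PosSemidef) (hP : Pᵀ * P = 1)
    (hLP : L * P = P * diagonal ev) (i : n) : 0 ≤ ev i := by
  have h := hL.conjTranspose_mul_mul_same P
  rw [conjTranspose_eq_transpose_of_trivial, Matrix.mul_assoc, hLP, ← Matrix.mul_assoc, hP,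
    Matrix.one_mul, posSemidef_diagonal_iff] at h
  exact h i

theorem trace_transpose_mul_mul_eq_sum (hP : Pᵀ * P = 1) (hLP : L * P = P * diagonal ev)
    (X : Matrix n m ℝ) : trace (Xᵀ * L * X) = ∑ i, ev i * ∑ j, (Pᵀ * X) i j ^ 2 := by
  have hL : L = P * diagonal ev * Pᵀ := by
    rw [← hLP, Matrix.mul_assoc, mul_eq_one_comm.mp hP, Matrix.mul_one]
  rw [← trace_transpose_mul_diagonal_mul, hL, transpose_mul, transpose_transpose]
  simp only [Matrix.mul_assoc]

theorem mul_sq_frobNorm_sub_proj_le_trace (hP : Pᵀ * P = 1) (hLP : L * P = P * diagonal ev)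
    (hev : ∀ i, 0 ≤ ev i) {e : ι → n} (he : Function.Injective e) {μ : ℝ}
    (hμ : ∀ i ∉ Set.range e, μ ≤ ev i) (X : Matrix n m ℝ) :
    μ * frobNorm (X - P.submatrix id e * (P.submatrix id e)ᵀ * X) ^ 2 ≤ trace (Xᵀ * L * X) := by
  rw [trace_transpose_mul_mul_eq_sum hP hLP, ← frobNorm_orthogonal_mul (P := Pᵀ)
    (by rw [transpose_transpose, mul_eq_one_comm.mp hP]), Matrix.mul_sub,
    transpose_mul_proj hP he, sq_frobNorm, Finset.mul_sum]
  refine Finset.sum_le_sum fun i _ => ?_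
  simp only [Matrix.sub_apply, diagonal_mul]
  by_cases hi : i ∈ Set.range e
  · simp only [Set.indicator_of_mem hi, Pi.one_apply, one_mul, sub_self]
    simpa using mul_nonneg (hev i) (by positivity)
  · simp only [Set.indicator_of_notMem hi, zero_mul, sub_zero]
    exact mul_le_mul_of_nonneg_right (hμ i hi) (by positivity)

theorem trace_quadForm_submatrix_mul_le (hP : Pᵀ * P = 1) (hLP : L * P = P * diagonal ev)
    {e : ι → n} {μ : ℝ} (hμ : ∀ i ∈ Set.range e, ev i ≤ μ) (A : Matrix ι m ℝ) :
    trace ((P.submatrix id e * A)ᵀ * L * (P.submatrix id e * A)) ≤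
      μ * frobNorm (P.submatrix id e * A) ^ 2 := by
  rw [trace_transpose_mul_mul_eq_sum hP hLP, ← frobNorm_orthogonal_mul (P := Pᵀ)
    (by rw [transpose_transpose, mul_eq_one_comm.mp hP]), sq_frobNorm, Finset.mul_sum]
  refine Finset.sum_le_sum fun i _ => ?_
  by_cases hi : i ∈ Set.range e
  · exact mul_le_mul_of_nonneg_right (hμ i hi) (by positivity)
  · simp [transpose_mul_submatrix_mul_apply_of_notMem hP A hi]

end Eigenbasis

theorem sq_vecNorm {ι : Type*} [Fintype ι] (x : ι → ℝ) : vecNorm x ^ 2 = ∑ i, x i ^ 2 :=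
  Real.sq_sqrt (by positivity)

theorem le_sqrt_div_mul_of_mul_sq_le {a c x y : ℝ} (ha : 0 < a) (hy : 0 ≤ y)
    (h : a * x ^ 2 ≤ c * y ^ 2) : x ≤ √(c / a) * y := by
  rw [← Real.sqrt_sq hy, ← Real.sqrt_mul' _ (sq_nonneg y)]
  refine Real.le_sqrt_of_sq_le ?_
  rw [div_mul_eq_mul_div, le_div_iff₀ ha]
  linarith

section Sampling

variable {ρ p k n : ℕ}

theorem exists_eq_mul_of_forall_inColSpan {B : Matrix (Fin p) (Fin k) ℝ}
    {X : Matrix (Fin p) (Fin n) ℝ} (hX : ∀ j, inColSpan B (fun i => X i j)) :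
    ∃ A : Matrix (Fin k) (Fin n) ℝ, X = B * A := by
  choose c hc using hX
  exact ⟨of fun l j => c j l, ext fun i j => congrFun (hc j) i⟩

theorem frobNorm_mul_le_of_isRowSelection {M : Matrix (Fin ρ) (Fin p) ℝ}
    (hM : IsRowSelection M) (X : Matrix (Fin p) (Fin n) ℝ) : frobNorm (M * X) ≤ frobNorm X := by
  obtain ⟨f, hf, hMf⟩ := hM
  have hMX : ∀ i j, (M * X) i j = X (f i) j := fun i j => by
    simp [mul_apply, hMf]
  refine Real.sqrt_le_sqrt ?_
  simp only [hMX]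
  calc ∑ i, ∑ j, X (f i) j ^ 2 = ∑ l ∈ Finset.univ.image f, ∑ j, X l j ^ 2 :=
        (Finset.sum_image (f := fun l => ∑ j, X l j ^ 2) fun a _ b _ h => hf h).symm
    _ ≤ ∑ l, ∑ j, X l j ^ 2 := Finset.sum_le_univ_sum_of_nonneg fun _ => by positivity

theorem frobNorm_mul_sub_le_of_isRowSelection {M : Matrix (Fin ρ) (Fin p) ℝ}
    (hM : IsRowSelection M) (Y Z W : Matrix (Fin p) (Fin n) ℝ)
    (E : Matrix (Fin ρ) (Fin n) ℝ) :
    frobNorm (M * (Y - Z)) ≤ frobNorm (M * W - (M * Z + E)) + frobNorm E + frobNorm (W - Y) := by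
  rw [show M * (Y - Z) = M * W - (M * Z + E) + E - M * (W - Y) by
    simp only [Matrix.mul_sub]; abel]
  exact (frobNorm_sub_le _ _).trans
    (add_le_add (frobNorm_add_le _ _) (frobNorm_mul_le_of_isRowSelection hM _))

theorem mul_sq_frobNorm_le_of_forall_mulVec {r q ι ν : Type*} [Fintype r] [Fintype q]
    [Fintype ι] [Fintype ν] {M : Matrix r q ℝ} {B : Matrix q ι ℝ} {a c : ℝ}
    (h : ∀ v, a * vecNorm (B *ᵥ v) ^ 2 ≤ c * vecNorm (M *ᵥ (B *ᵥ v)) ^ 2) (A : Matrix ι ν ℝ) :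
    a * frobNorm (B * A) ^ 2 ≤ c * frobNorm (M * (B * A)) ^ 2 := by
  rw [sq_frobNorm, sq_frobNorm, Finset.sum_comm, Finset.sum_comm (γ := r), Finset.mul_sum,
    Finset.mul_sum]
  refine Finset.sum_le_sum fun j _ => ?_
  have hj := h fun l => A l j
  rwa [sq_vecNorm, sq_vecNorm] at hj

theorem frobNorm_proj_mul_sub_le {M : Matrix (Fin ρ) (Fin p) ℝ} (hM : IsRowSelection M)
    {B : Matrix (Fin p) (Fin k) ℝ} {a c : ℝ} (ha : 0 < a)
    (h : ∀ v, a * vecNorm (B *ᵥ v) ^ 2 ≤ c * vecNorm (M *ᵥ (B *ᵥ v)) ^ 2)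
    (W : Matrix (Fin p) (Fin n) ℝ) (A : Matrix (Fin k) (Fin n) ℝ) (E : Matrix (Fin ρ) (Fin n) ℝ) :
    frobNorm (B * Bᵀ * W - B * A) ≤
      √(c / a) * (frobNorm (M * W - (M * (B * A) + E)) + frobNorm E
        + frobNorm (W - B * Bᵀ * W)) := by
  have hrip := le_sqrt_div_mul_of_mul_sq_le ha (frobNorm_nonneg _)
    (mul_sq_frobNorm_le_of_forall_mulVec h (Bᵀ * W - A))
  rw [Matrix.mul_sub, ← Matrix.mul_assoc] at hrip
  exact hrip.trans (mul_le_mul_of_nonneg_left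
    (frobNorm_mul_sub_le_of_isRowSelection hM _ _ W E) (Real.sqrt_nonneg _))

end Sampling

theorem le_and_sqrt_mul_le_of_objective_le {a e u d t t₀ γ lam lam' : ℝ} (hγ : 0 ≤ γ)
    (hlam : 0 ≤ lam) (hlam' : 0 ≤ lam') (he : 0 ≤ e) (hu : 0 ≤ u)
    (hopt : a ^ 2 + γ * t ≤ e ^ 2 + γ * t₀) (ht : lam' * d ^ 2 ≤ t) (ht₀ : t₀ ≤ lam * u ^ 2) :
    a ≤ e + √(γ * lam) * u ∧ √(γ * lam') * d ≤ e + √(γ * lam) * u := by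
  have hB : e ^ 2 + γ * lam * u ^ 2 ≤ (e + √(γ * lam) * u) ^ 2 := by
    nlinarith [Real.sq_sqrt (mul_nonneg hγ hlam),
      mul_nonneg (mul_nonneg he (Real.sqrt_nonneg (γ * lam))) hu]
  have hB0 : 0 ≤ e + √(γ * lam) * u := by positivity
  have hγt := mul_le_mul_of_nonneg_left ht hγ
  have hγt₀ := mul_le_mul_of_nonneg_left ht₀ hγ
  refine ⟨le_of_sq_le_sq ?_ hB0, le_of_sq_le_sq ?_ hB0⟩
  · nlinarith [sq_nonneg d, mul_nonneg (mul_nonneg hγ hlam') (sq_nonneg d)]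
  · rw [mul_pow, Real.sq_sqrt (mul_nonneg hγ hlam')]
    nlinarith [sq_nonneg a]

theorem Monotone.apply_castLE_le_of_notMem_range {α : Type*} [Preorder α] {p kr : ℕ}
    {f : Fin p → α} (hf : Monotone f) (h : kr < p) {i : Fin p}
    (hi : i ∉ Set.range (Fin.castLE h.le)) : f ⟨kr, h⟩ ≤ f i :=
  hf (by simpa [Fin.range_castLE, Fin.le_def] using hi)

theorem Monotone.le_apply_of_mem_range_castLE {α : Type*} [Preorder α] {p kr : ℕ}
    {f : Fin p → α} (hf : Monotone f) (h : kr < p) {i : Fin p}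
    (hi : i ∈ Set.range (Fin.castLE h.le)) : f i ≤ f ⟨kr - 1, (Nat.sub_le kr 1).trans_lt h⟩ :=
  hf (by simp only [Fin.range_castLE, Set.mem_ofPred_eq] at hi; show (i : ℕ) ≤ kr - 1; omega)

/-- The `1`-indexed eigenvalues `λ_{k_r}` and `λ_{k_r+1}` are `ev ⟨kr - 1, _⟩` and `ev ⟨kr, _⟩`. -/
theorem approximate_decoder_U_bound
    (p ρr kr k : ℕ) (hkr : kr < p)
    (Lr : Matrix (Fin p) (Fin p) ℝ) (hLr : Lr.PosSemidef)
    (ev : Fin p → ℝ) (hev : Monotone ev)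
    (P : Matrix (Fin p) (Fin p) ℝ) (hPorth : Pᵀ * P = 1)
    (hLrP : Lr * P = P * Matrix.diagonal ev)
    (Pkr : Matrix (Fin p) (Fin kr) ℝ) (hPkr : Pkr = P.submatrix id (Fin.castLE hkr.le))
    (Mr : Matrix (Fin ρr) (Fin p) ℝ) (hMr : IsRowSelection Mr)
    (δ : ℝ) (hδ : δ ∈ Set.Ioo (0 : ℝ) 1)
    (hRIP : ∀ z : Fin p → ℝ, inColSpan Pkr z →
      (1 - δ) * (vecNorm z) ^ 2 ≤ ((p : ℝ) / ρr) * (vecNorm (Mr.mulVec z)) ^ 2 ∧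
      ((p : ℝ) / ρr) * (vecNorm (Mr.mulVec z)) ^ 2 ≤ (1 + δ) * (vecNorm z) ^ 2)
    (hlam1 : 0 < ev ⟨kr, hkr⟩)
    (γr' : ℝ) (hγr' : 0 < γr')
    (Ubar : Matrix (Fin p) (Fin k) ℝ) (hUbar : ∀ j, inColSpan Pkr (fun i => Ubar i j))
    (Eu : Matrix (Fin ρr) (Fin k) ℝ)
    (Util : Matrix (Fin ρr) (Fin k) ℝ) (hUtil : Util = Mr * Ubar + Eu)
    (Ustar : Matrix (Fin p) (Fin k) ℝ)
    (hmin : ∀ U : Matrix (Fin p) (Fin k) ℝ,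
      (frobNorm (Mr * Ustar - Util)) ^ 2 + γr' * Matrix.trace (Ustarᵀ * Lr * Ustar) ≤
      (frobNorm (Mr * U - Util)) ^ 2 + γr' * Matrix.trace (Uᵀ * Lr * U)) :
    frobNorm (Pkr * Pkrᵀ * Ustar - Ubar) ≤
      Real.sqrt (2 * p / ((ρr : ℝ) * (1 - δ))) *
        ((2 + 1 / Real.sqrt (γr' * ev ⟨kr, hkr⟩)) * frobNorm Eu +
          (Real.sqrt (ev ⟨kr - 1, by omega⟩ / ev ⟨kr, hkr⟩)
            + Real.sqrt (γr' * ev ⟨kr - 1, by omega⟩)) * frobNorm Ubar) := by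
  obtain ⟨A, rfl⟩ := exists_eq_mul_of_forall_inColSpan hUbar
  subst hPkr hUtil
  set Pkr := P.submatrix id (Fin.castLE hkr.le)
  set lam := ev ⟨kr - 1, by omega⟩
  set lam' := ev ⟨kr, hkr⟩
  have hev₀ := eigenvalues_nonneg hLr hPorth hLrP
  have hfit := hmin (Pkr * A)
  rw [sub_add_cancel_left, frobNorm_neg] at hfit
  obtain ⟨ha, hd⟩ := le_and_sqrt_mul_le_of_objective_le hγr'.le (hev₀ _) (hev₀ _)
    (frobNorm_nonneg _) (frobNorm_nonneg _) hfit
    (mul_sq_frobNorm_sub_proj_le_trace hPorth hLrP hev₀ (Fin.castLE_injective hkr.le)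
      (fun _ => hev.apply_castLE_le_of_notMem_range hkr) Ustar)
    (trace_quadForm_submatrix_mul_le hPorth hLrP (fun _ => hev.le_apply_of_mem_range_castLE hkr) A)
  set B := frobNorm Eu + √(γr' * lam) * frobNorm (Pkr * A)
  have hg : 0 < √(γr' * lam') := Real.sqrt_pos.2 (mul_pos hγr' hlam1)
  have h1δ : 0 < 1 - δ := sub_pos.2 hδ.2
  calc frobNorm (Pkr * Pkrᵀ * Ustar - Pkr * A)
      ≤ √(p / ρr / (1 - δ)) * (frobNorm (Mr * Ustar - (Mr * (Pkr * A) + Eu)) + frobNorm Eu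
          + frobNorm (Ustar - Pkr * Pkrᵀ * Ustar)) :=
        frobNorm_proj_mul_sub_le hMr h1δ (fun v => (hRIP _ ⟨v, rfl⟩).1) Ustar A Eu
    _ ≤ √(2 * p / (ρr * (1 - δ))) * (B + frobNorm Eu + B / √(γr' * lam')) := by
        gcongr ?_ * (?_ + _ + ?_)
        · exact add_nonneg (add_nonneg (frobNorm_nonneg _) (frobNorm_nonneg _)) (frobNorm_nonneg _)
        · rw [div_div]; gcongr; linarith [p.cast_nonneg (α := ℝ)]
        · exact (le_div_iff₀' hg).2 hd
    _ = _ := by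
        rw [show √(lam / lam') = √(γr' * lam) / √(γr' * lam') by
          rw [← Real.sqrt_div' _ (by positivity), mul_div_mul_left _ _ hγr'.ne']]
        ring
end

section
/- Let M_r ∈ ℝ^{ρ_r×p} be a row-selection matrix and M_c ∈ ℝ^{n×ρ_c} a column-selection matrix, let P_{k_r} ∈ ℝ^{p×k_r} and Q_{k_c} ∈ ℝ^{n×k_c} have orthonormal columns, and let δ_r, δ_c ∈ (0,1). Suppose (1−δ_r)‖z‖₂² ≤ (p/ρ_r)‖M_r z‖₂² ≤ (1+δ_r)‖z‖₂² for all z ∈ span(P_{k_r}) and (1−δ_c)‖w‖₂² ≤ (n/ρ_c)‖M_c^⊤ w‖₂² ≤ (1+δ_c)‖w‖₂² for all w ∈ span(Q_{k_c}). Then for every Y ∈ ℝ^{p×n} whose columns lie in span(P_{k_r}) and whose rows lie in span(Q_{k_c}), one has (1−δ_c)(1−δ_r)‖Y‖_F² ≤ (np/(ρ_c ρ_r))‖M_r Y M_c‖_F² ≤ (1+δ_c)(1+δ_r)‖Y‖_F². -/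
/-!
Every column of `Y` lies in `span(P)`, so summing the row RIP over the columns of `Y` sandwiches
`(p/ρ_r) ‖M_r Y‖_F²` between `(1 ∓ δ_r) ‖Y‖_F²`. Every row of `M_r Y` is a row of `Y`, hence lies
in `span(Q)`, so summing the column RIP over the rows of `M_r Y` sandwiches
`(n/ρ_c) ‖M_r Y M_c‖_F²` between `(1 ∓ δ_c) ‖M_r Y‖_F²`. Chaining the two sandwiches gives the claim.
-/

open Matrix

def RestrictedIsometryOn {m k : Type*} [Fintype m] [Fintype k]
    (A : Matrix m k ℝ) (c δ : ℝ) (S : (k → ℝ) → Prop) : Prop :=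
  ∀ z, S z →
    (1 - δ) * vecNorm z ^ 2 ≤ c * vecNorm (A *ᵥ z) ^ 2 ∧
    c * vecNorm (A *ᵥ z) ^ 2 ≤ (1 + δ) * vecNorm z ^ 2

section FrobeniusNorm

variable {m n k : Type*} [Fintype m] [Fintype n] [Fintype k]

lemma frobNorm_sq_eq_sum_cols (A : Matrix m n ℝ) :
    frobNorm A ^ 2 = ∑ j, vecNorm (fun i => A i j) ^ 2 := by
  rw [frobNorm, Real.sq_sqrt (by positivity), Finset.sum_comm]
  congr! with j
  exact (Real.sq_sqrt (by positivity)).symm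

lemma frobNorm_transpose (A : Matrix m n ℝ) : frobNorm Aᵀ = frobNorm A := by
  rw [frobNorm, frobNorm, Finset.sum_comm]
  rfl

lemma RestrictedIsometryOn.frobNorm_mul {A : Matrix m k ℝ} {c δ : ℝ} {S : (k → ℝ) → Prop}
    (hA : RestrictedIsometryOn A c δ S) {Y : Matrix k n ℝ} (hY : ∀ j, S (fun i => Y i j)) :
    (1 - δ) * frobNorm Y ^ 2 ≤ c * frobNorm (A * Y) ^ 2 ∧
    c * frobNorm (A * Y) ^ 2 ≤ (1 + δ) * frobNorm Y ^ 2 := by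
  have hcol : ∀ j, (fun i => (A * Y) i j) = A *ᵥ fun i => Y i j := fun j => by
    funext i
    simp only [mul_apply, mulVec, dotProduct]
  simp only [frobNorm_sq_eq_sum_cols, Finset.mul_sum, hcol]
  exact ⟨Finset.sum_le_sum fun j _ => (hA _ (hY j)).1,
    Finset.sum_le_sum fun j _ => (hA _ (hY j)).2⟩

lemma RestrictedIsometryOn.frobNorm_mul_of_transpose {B : Matrix k n ℝ} {c δ : ℝ}
    {S : (k → ℝ) → Prop} (hB : RestrictedIsometryOn Bᵀ c δ S) {Z : Matrix m k ℝ}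
    (hZ : ∀ i, S (Z i)) :
    (1 - δ) * frobNorm Z ^ 2 ≤ c * frobNorm (Z * B) ^ 2 ∧
    c * frobNorm (Z * B) ^ 2 ≤ (1 + δ) * frobNorm Z ^ 2 := by
  have h := hB.frobNorm_mul (Y := Zᵀ) hZ
  rwa [← transpose_mul, frobNorm_transpose, frobNorm_transpose] at h

end FrobeniusNorm

lemma IsRowSelection.exists_row_mul_eq {ρ p n : ℕ} {M : Matrix (Fin ρ) (Fin p) ℝ}
    (hM : IsRowSelection M) (Y : Matrix (Fin p) (Fin n) ℝ) (i : Fin ρ) :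
    ∃ i', (M * Y) i = Y i' := by
  obtain ⟨f, -, hf⟩ := hM
  exact ⟨f i, funext fun j => by simp [mul_apply, hf]⟩

lemma sandwich_trans {a b s t x y w : ℝ} (hs : 0 ≤ s) (hb₁ : 0 ≤ 1 - b) (hb₂ : 0 ≤ 1 + b)
    (h₁ : (1 - a) * x ≤ s * y ∧ s * y ≤ (1 + a) * x)
    (h₂ : (1 - b) * y ≤ t * w ∧ t * w ≤ (1 + b) * y) :
    (1 - b) * (1 - a) * x ≤ t * s * w ∧ t * s * w ≤ (1 + b) * (1 + a) * x := by
  constructor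
  · linarith [mul_le_mul_of_nonneg_left h₁.1 hb₁, mul_le_mul_of_nonneg_left h₂.1 hs]
  · linarith [mul_le_mul_of_nonneg_left h₁.2 hb₂, mul_le_mul_of_nonneg_left h₂.2 hs]

theorem rip_combined_general
    (p n ρr ρc kr kc : ℕ)
    (Mr : Matrix (Fin ρr) (Fin p) ℝ) (hMr : IsRowSelection Mr)
    (Mc : Matrix (Fin n) (Fin ρc) ℝ)
    (Pkr : Matrix (Fin p) (Fin kr) ℝ)
    (Qkc : Matrix (Fin n) (Fin kc) ℝ)
    (δr δc : ℝ) (hδc : δc ∈ Set.Ioo (0 : ℝ) 1)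
    (hRIPr : ∀ z : Fin p → ℝ, inColSpan Pkr z →
      (1 - δr) * (vecNorm z) ^ 2 ≤ ((p : ℝ) / ρr) * (vecNorm (Mr.mulVec z)) ^ 2 ∧
      ((p : ℝ) / ρr) * (vecNorm (Mr.mulVec z)) ^ 2 ≤ (1 + δr) * (vecNorm z) ^ 2)
    (hRIPc : ∀ w : Fin n → ℝ, inColSpan Qkc w →
      (1 - δc) * (vecNorm w) ^ 2 ≤ ((n : ℝ) / ρc) * (vecNorm (Mcᵀ.mulVec w)) ^ 2 ∧
      ((n : ℝ) / ρc) * (vecNorm (Mcᵀ.mulVec w)) ^ 2 ≤ (1 + δc) * (vecNorm w) ^ 2)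
    (Y : Matrix (Fin p) (Fin n) ℝ) (hY : memLR Pkr Qkc Y) :
    (1 - δc) * (1 - δr) * (frobNorm Y) ^ 2 ≤
      ((n : ℝ) * p / ((ρc : ℝ) * ρr)) * (frobNorm (Mr * Y * Mc)) ^ 2 ∧
    ((n : ℝ) * p / ((ρc : ℝ) * ρr)) * (frobNorm (Mr * Y * Mc)) ^ 2 ≤
      (1 + δc) * (1 + δr) * (frobNorm Y) ^ 2 := by
  have hRowBounds := RestrictedIsometryOn.frobNorm_mul (S := inColSpan Pkr) hRIPr hY.1
  have hRowsInSpan : ∀ i, inColSpan Qkc ((Mr * Y) i) := fun i => by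
    obtain ⟨i', hi'⟩ := hMr.exists_row_mul_eq Y i
    exact hi' ▸ hY.2 i'
  have hColBounds :=
    RestrictedIsometryOn.frobNorm_mul_of_transpose (S := inColSpan Qkc) hRIPc hRowsInSpan
  rw [← div_mul_div_comm]
  exact sandwich_trans (by positivity) (by linarith [hδc.2]) (by linarith [hδc.1])
    hRowBounds hColBounds

/-- combining a row RIP on `span(P_{k_r})` and a column RIP on
`span(Q_{k_c})` gives a two-sided RIP for matrices in `LR(P_{k_r}, Q_{k_c})`. -/
theorem rip_combined
    (p n ρr ρc kr kc : ℕ)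
    (Mr : Matrix (Fin ρr) (Fin p) ℝ) (hMr : IsRowSelection Mr)
    (Mc : Matrix (Fin n) (Fin ρc) ℝ) (hMc : IsColSelection Mc)
    (Pkr : Matrix (Fin p) (Fin kr) ℝ) (hP : Pkrᵀ * Pkr = 1)
    (Qkc : Matrix (Fin n) (Fin kc) ℝ) (hQ : Qkcᵀ * Qkc = 1)
    (δr δc : ℝ) (hδr : δr ∈ Set.Ioo (0 : ℝ) 1) (hδc : δc ∈ Set.Ioo (0 : ℝ) 1)
    (hRIPr : ∀ z : Fin p → ℝ, inColSpan Pkr z →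
      (1 - δr) * (vecNorm z) ^ 2 ≤ ((p : ℝ) / ρr) * (vecNorm (Mr.mulVec z)) ^ 2 ∧
      ((p : ℝ) / ρr) * (vecNorm (Mr.mulVec z)) ^ 2 ≤ (1 + δr) * (vecNorm z) ^ 2)
    (hRIPc : ∀ w : Fin n → ℝ, inColSpan Qkc w →
      (1 - δc) * (vecNorm w) ^ 2 ≤ ((n : ℝ) / ρc) * (vecNorm (Mcᵀ.mulVec w)) ^ 2 ∧
      ((n : ℝ) / ρc) * (vecNorm (Mcᵀ.mulVec w)) ^ 2 ≤ (1 + δc) * (vecNorm w) ^ 2)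
    (Y : Matrix (Fin p) (Fin n) ℝ) (hY : memLR Pkr Qkc Y) :
    (1 - δc) * (1 - δr) * (frobNorm Y) ^ 2 ≤
      ((n : ℝ) * p / ((ρc : ℝ) * ρr)) * (frobNorm (Mr * Y * Mc)) ^ 2 ∧
    ((n : ℝ) * p / ((ρc : ℝ) * ρr)) * (frobNorm (Mr * Y * Mc)) ^ 2 ≤
      (1 + δc) * (1 + δr) * (frobNorm Y) ^ 2 :=
  rip_combined_general p n ρr ρc kr kc Mr hMr Mc Pkr Qkc δr δc hδc hRIPr hRIPc Y hY
end
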